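/- For s = (α, β) ∈ ℚ², M a positive integer, and γ = (a b; c d) ∈ SL₂(ℤ), the function F^{(s)}(ε; τ) := exp(Mπε²/Im(τ)) · e(Mαβ + 2Mαε) · e(Mα²τ) satisfies F^{(s)}(ε/(cτ+d); γτ) = e(−(cM/(cτ+d)) · (z_{sγ}(τ) + ε)²) · F^{(sγ)}(ε; τ), where sγ = (aα + cβ, bα + dβ) and z_{sγ}(τ) = (aα + cβ)τ + (bα + dβ). -/

import Mathlib

/-!
Writing `q = cτ + d`, the non-holomorphic factor `exp(Mπε²/Im τ)` is handled by
`Im(γτ) = Im τ / |q|²` and `|q|²/q² = q̄/q = 1 - 2ic Im τ / q`: evaluated at `(ε/q, γτ)`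
it equals `e(-cMε²/q) exp(Mπε²/Im τ)`. All remaining factors are of the form `e(·)`, and the
claim reduces to an identity between their exponents, which is polynomial after clearing `q`
and holds modulo `ad - bc = 1`.
-/

noncomputable section

/-- `e(w) := exp(2πiw)`. -/
def ee (w : ℂ) : ℂ := Complex.exp (2 * (Real.pi : ℂ) * Complex.I * w)

/-- The function `F^{(s)}(ε;τ)` for `s = (α,β) ∈ ℚ²` and index `M`. -/
def FF (M : ℕ) (α β : ℚ) (ε τ : ℂ) : ℂ :=
  Complex.exp ((M : ℂ) * (Real.pi : ℂ) * ε ^ 2 / (τ.im : ℂ)) *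
    ee ((M : ℂ) * (α : ℂ) * (β : ℂ) + 2 * (M : ℂ) * (α : ℂ) * ε) *
    ee ((M : ℂ) * (α : ℂ) ^ 2 * τ)

open Complex

lemma ee_add (x y : ℂ) : ee (x + y) = ee x * ee y := by
  simp only [ee, mul_add, exp_add]

lemma FF_eq_exp_mul_ee (M : ℕ) (α β : ℚ) (ε τ : ℂ) :
    FF M α β ε τ =
      exp (M * Real.pi * ε ^ 2 / τ.im) * ee (M * (α * β + 2 * α * ε + α ^ 2 * τ)) := by
  rw [FF, mul_assoc, ← ee_add]
  ring_nf

lemma ofReal_mul_add_ne_zero_of_det {τ : ℂ} (hτ : τ.im ≠ 0) {a b c d : ℝ}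
    (hdet : a * d - b * c = 1) : (c : ℂ) * τ + d ≠ 0 := by
  intro h
  have him : c * τ.im = 0 := by simpa using congrArg im h
  have hc : c = 0 := (mul_eq_zero.mp him).resolve_right hτ
  simp only [hc, ofReal_zero, zero_mul, zero_add, ofReal_eq_zero] at h
  simp [h, hc] at hdet

lemma im_moebius (a b c d : ℝ) (τ : ℂ) :
    ((a * τ + b) / (c * τ + d)).im = (a * d - b * c) * τ.im / normSq (c * τ + d) := by
  rw [div_im, ← sub_div]
  congr 1
  simp only [add_im, mul_im, ofReal_re, ofReal_im, zero_mul, add_zero, add_re, mul_re, sub_zero]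
  ring

lemma normSq_div_sq_ofReal_mul_add (c d : ℝ) (τ : ℂ) (hq : (c : ℂ) * τ + d ≠ 0) :
    (normSq (c * τ + d) : ℂ) / (c * τ + d) ^ 2 = 1 - 2 * I * c * τ.im / (c * τ + d) := by
  have hconj : (starRingEnd ℂ) (c * τ + d) = c * τ + d - 2 * I * c * τ.im := by
    have := sub_conj ((c : ℂ) * τ + d)
    simp only [add_im, mul_im, ofReal_re, ofReal_im, zero_mul, add_zero] at this
    push_cast at this
    linear_combination -this
  rw [← mul_conj, hconj]
  field_simp

lemma exp_gaussian_moebius (m ε τ : ℂ) (hτ : τ.im ≠ 0) (a b c d : ℝ)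
    (hdet : a * d - b * c = 1) :
    exp (m * Real.pi * (ε / (c * τ + d)) ^ 2 / ((a * τ + b) / (c * τ + d)).im) =
      ee (-(c * m / (c * τ + d)) * ε ^ 2) * exp (m * Real.pi * ε ^ 2 / τ.im) := by
  have hq := ofReal_mul_add_ne_zero_of_det hτ hdet
  have hns := normSq_div_sq_ofReal_mul_add c d τ hq
  have hτ' : (τ.im : ℂ) ≠ 0 := ofReal_ne_zero.mpr hτ
  rw [ee, ← exp_add, im_moebius, hdet, one_mul]
  congr 1
  push_cast
  calc m * Real.pi * (ε / (c * τ + d)) ^ 2 / (τ.im / normSq (c * τ + d))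
      = m * Real.pi * ε ^ 2 / τ.im * ((normSq (c * τ + d) : ℂ) / (c * τ + d) ^ 2) := by
        field_simp
    _ = _ := by
      rw [hns]
      field_simp
      ring

lemma exponent_moebius (m α β ε τ a b c d : ℂ) (hq : c * τ + d ≠ 0)
    (hdet : a * d - b * c = 1) :
    -(c * m / (c * τ + d)) * ε ^ 2
        + m * (α * β + 2 * α * (ε / (c * τ + d)) + α ^ 2 * ((a * τ + b) / (c * τ + d))) =
      -(c * m / (c * τ + d)) * ((a * α + c * β) * τ + (b * α + d * β) + ε) ^ 2
        + m * ((a * α + c * β) * (b * α + d * β) + 2 * (a * α + c * β) * ε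
          + (a * α + c * β) ^ 2 * τ) := by
  field_simp
  linear_combination (-m * α * (2 * ε + (a * α + c * β) * τ + (b * α + d * β))) * hdet

theorem stmt1_general (M : ℕ) (α β : ℚ) (ε τ : ℂ) (hτ : 0 < τ.im)
    (a b c d : ℤ) (hdet : a * d - b * c = 1) :
    FF M α β (ε / ((c : ℂ) * τ + (d : ℂ))) (((a : ℂ) * τ + (b : ℂ)) / ((c : ℂ) * τ + (d : ℂ)))
      = ee (-(((c : ℂ) * (M : ℂ)) / ((c : ℂ) * τ + (d : ℂ)))
            * (((a * α + c * β : ℚ) : ℂ) * τ + ((b * α + d * β : ℚ) : ℂ) + ε) ^ 2)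
        * FF M (a * α + c * β) (b * α + d * β) ε τ := by
  have hdetR : (a : ℝ) * d - b * c = 1 := by exact_mod_cast hdet
  have hq : (c : ℂ) * τ + d ≠ 0 := by
    exact_mod_cast ofReal_mul_add_ne_zero_of_det hτ.ne' hdetR
  have hgauss := exp_gaussian_moebius M ε τ hτ.ne' a b c d hdetR
  push_cast at hgauss
  rw [FF_eq_exp_mul_ee, FF_eq_exp_mul_ee, hgauss, mul_right_comm, ← ee_add,
    exponent_moebius _ _ _ _ _ _ _ _ _ hq (by exact_mod_cast hdet), ee_add]
  push_cast
  ring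

/-- Modular transformation law of `F^{(s)}` under `γ = (a b; c d) ∈ SL₂(ℤ)`:
`F^{(s)}(ε/(cτ+d); γτ) = e(−(cM/(cτ+d))(z_{sγ}(τ)+ε)²) F^{(sγ)}(ε;τ)` where
`sγ = (aα+cβ, bα+dβ)` and `z_{sγ}(τ) = (aα+cβ)τ + (bα+dβ)`. -/
theorem stmt1 (M : ℕ) (hM : 1 ≤ M) (α β : ℚ) (ε τ : ℂ) (hτ : 0 < τ.im)
    (a b c d : ℤ) (hdet : a * d - b * c = 1) :
    FF M α β (ε / ((c : ℂ) * τ + (d : ℂ))) (((a : ℂ) * τ + (b : ℂ)) / ((c : ℂ) * τ + (d : ℂ)))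
      = ee (-(((c : ℂ) * (M : ℂ)) / ((c : ℂ) * τ + (d : ℂ)))
            * (((a * α + c * β : ℚ) : ℂ) * τ + ((b * α + d * β : ℚ) : ℂ) + ε) ^ 2)
        * FF M (a * α + c * β) (b * α + d * β) ε τ :=
  stmt1_general M α β ε τ hτ a b c d hdet
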